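/- For every integer n ≥ 2 and every integer k with 1 ≤ k < ⌈n/2⌉, the coalescence manifold C_{n,k} is a proper subset of C_{n,k+1}, i.e., C_{n,k} ⊆ C_{n,k+1} and C_{n,k} ≠ C_{n,k+1}. -/

import Mathlib

open Finset

/-- The map `χ_{n,k}`: given breakpoint parameters `x` (used at indices `1, …, k-1`, with the
convention `x_k = 0`) and population sizes `y` (used at indices `1, …, k`), its coordinate
indexed by `i : Fin (n-1)` (corresponding to `m = i + 2`, `m = 2, …, n`) is
`c_m = (1/C(m,2)) ∑_{j=1}^k y_j (∏_{l=1}^{j-1} x_l^{C(m,2)}) (1 - x_j^{C(m,2)})`. -/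
noncomputable def chi (n k : ℕ) (x y : ℕ → ℝ) : Fin (n - 1) → ℝ :=
  fun i =>
    (1 / ((i.val + 2).choose 2 : ℝ)) *
      ∑ j ∈ Finset.Icc 1 k,
        y j * (∏ l ∈ Finset.Icc 1 (j - 1), x l ^ (i.val + 2).choose 2) *
          (1 - (if j = k then (0 : ℝ) else x j) ^ (i.val + 2).choose 2)

/-- The coalescence manifold `C_{n,k} ⊆ ℝ^{n-1}`: the image of `χ_{n,k}` over parameters
`x ∈ (0,1)^{k-1}`, `y ∈ (0,∞)^k`. -/
def Coal (n k : ℕ) : Set (Fin (n - 1) → ℝ) :=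
  { c | ∃ x y : ℕ → ℝ,
      (∀ j, 1 ≤ j → j ≤ k - 1 → 0 < x j ∧ x j < 1) ∧
      (∀ j, 1 ≤ j → j ≤ k → 0 < y j) ∧
      c = chi n k x y }

/-!
Abel summation writes `C(m,2) · c_m = ∑_j w_j Q_j ^ C(m,2)`, an exponential sum in the exponent
`C(m,2)` over the bases `Q_j = x₁ ⋯ x_j` (`Q₀ = 1`) whose weights `w_j` are the increments of `y`.
Appending a base `Q_k` with weight `y_{k+1} - y_k = 0` gives `C_{n,k} ⊆ C_{n,k+1}`.

For strictness, an exponential sum `∑ c_r r ^ s` with `N` distinct positive bases that vanishes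
at `N` real exponents has all coefficients zero (divide by one of the powers, differentiate and
count zeros with Rolle's theorem). The point with `x ≡ 1/2`, `y_j = j` of `C_{n,k+1}` has `k + 1`
distinct bases with nonzero weights, a point of `C_{n,k}` has at most `k`, and there are
`n - 1 ≥ 2k` exponents `C(m,2)`, so the two weight vectors would have to coincide.
-/

lemma exists_finset_deriv_eq_zero {f : ℝ → ℝ} (hf : Differentiable ℝ f) {S : Finset ℝ}
    (hS : ∀ s ∈ S, f s = 0) : ∃ T : Finset ℝ, #S ≤ #T + 1 ∧ ∀ t ∈ T, deriv f t = 0 := by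
  by_cases hZ : {t | deriv f t = 0}.Finite
  · refine ⟨hZ.toFinset, card_le_of_interleaved fun a ha b hb hab _ => ?_, by simp⟩
    obtain ⟨c, hc, hc0⟩ := exists_deriv_eq_zero hab hf.continuous.continuousOn
      ((hS a ha).trans (hS b hb).symm)
    exact ⟨c, by simpa using hc0, hc⟩
  · obtain ⟨T, hTZ, hT⟩ := Set.not_finite.mp hZ |>.exists_subset_card_eq #S
    exact ⟨T, by omega, fun t ht => hTZ ht⟩

lemma eq_zero_of_forall_sum_mul_rpow_eq_zero {B : Finset ℝ} (hB : ∀ r ∈ B, 0 < r) {S : Finset ℝ}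
    (hBS : #B ≤ #S) {c : ℝ → ℝ} (h : ∀ s ∈ S, ∑ r ∈ B, c r * r ^ s = 0) :
    ∀ r ∈ B, c r = 0 := by
  induction B using Finset.induction_on generalizing S c with
  | empty => simp
  | insert a B ha ih =>
    have ha0 : 0 < a := hB a (mem_insert_self a B)
    have hB0 : ∀ r ∈ B, 0 < r := fun r hr => hB r (mem_insert_of_mem hr)
    -- In `f'` the base `a` drops out, since `log (a / a) = 0`.
    set f : ℝ → ℝ := fun u => ∑ r ∈ insert a B, c r * (r / a) ^ u
    have hf : ∀ u, HasDerivAt f (∑ r ∈ insert a B, c r * ((r / a) ^ u * Real.log (r / a))) u :=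
      fun u => HasDerivAt.fun_sum fun r hr =>
        ((Real.hasStrictDerivAt_const_rpow (div_pos (hB r hr) ha0) u).hasDerivAt).const_mul _
    have hf_div (u : ℝ) : f u = (∑ r ∈ insert a B, c r * r ^ u) / a ^ u := by
      rw [sum_div]
      refine sum_congr rfl fun r hr => ?_
      rw [Real.div_rpow (hB r hr).le ha0.le, mul_div_assoc]
    obtain ⟨T, hST, hT⟩ := exists_finset_deriv_eq_zero (fun u => (hf u).differentiableAt)
      (S := S) fun s hs => by rw [hf_div, h s hs, zero_div]
    have hBT : #B ≤ #T := by rw [card_insert_of_notMem ha] at hBS; omega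
    have hBc : ∀ r ∈ B, c r * Real.log (r / a) = 0 := by
      refine ih hB0 hBT fun t ht => ?_
      calc ∑ r ∈ B, c r * Real.log (r / a) * r ^ t
          = a ^ t * ∑ r ∈ insert a B, c r * ((r / a) ^ t * Real.log (r / a)) := by
            rw [sum_insert ha, div_self ha0.ne', Real.log_one, mul_zero, mul_zero, zero_add,
              mul_sum]
            refine sum_congr rfl fun r hr => ?_
            rw [Real.div_rpow (hB0 r hr).le ha0.le]
            field_simp
        _ = 0 := by rw [← (hf t).deriv, hT t ht, mul_zero]
    have hc : ∀ r ∈ B, c r = 0 := fun r hr =>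
      (mul_eq_zero.mp (hBc r hr)).resolve_right <| Real.log_ne_zero_of_pos_of_ne_one
        (div_pos (hB0 r hr) ha0) fun h1 => ha ((div_eq_one_iff_eq ha0.ne').mp h1 ▸ hr)
    obtain ⟨s, hs⟩ : S.Nonempty := card_pos.mp (by rw [card_insert_of_notMem ha] at hBS; omega)
    have hca : c a * a ^ s = 0 := by
      rw [← h s hs, sum_insert ha, sum_eq_zero fun r hr => by rw [hc r hr, zero_mul], add_zero]
    intro r hr
    rcases mem_insert.mp hr with rfl | hr
    · exact (mul_eq_zero.mp hca).resolve_right (Real.rpow_pos_of_pos ha0 s).ne'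
    · exact hc r hr

lemma Finsupp.eq_zero_of_forall_linearCombination_rpow_eq_zero {c : ℝ →₀ ℝ}
    (hc : ∀ r ∈ c.support, 0 < r) {S : Finset ℝ} (hcS : #c.support ≤ #S)
    (h : ∀ s ∈ S, Finsupp.linearCombination ℝ (fun r : ℝ => r ^ s) c = 0) : c = 0 := by
  ext r
  by_contra hr
  refine hr (eq_zero_of_forall_sum_mul_rpow_eq_zero hc hcS (fun s hs => ?_) r
    (Finsupp.mem_support_iff.mpr hr))
  simpa [Finsupp.linearCombination_apply, Finsupp.sum] using h s hs

lemma Finsupp.support_sum_single_of_injective {ι α M : Type*} [DecidableEq α] [AddCommMonoid M]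
    {f : ι → α} (hf : Function.Injective f) (s : Finset ι) {m : M} (hm : m ≠ 0) :
    (∑ i ∈ s, Finsupp.single (f i) m).support = s.image f := by
  rw [Finsupp.support_sum_eq_biUnion]
  · simp [Finsupp.support_single _ hm, biUnion_singleton]
  · intro i j hij
    simpa [Finsupp.support_single _ hm] using hf.ne hij

lemma sum_range_mul_sub_ite {R : Type*} [CommRing R] (K : ℕ) (y a : ℕ → R) :
    ∑ j ∈ range (K + 1), y (j + 1) * (a j - if j = K then 0 else a (j + 1)) =
      y 1 * a 0 + ∑ j ∈ range K, (y (j + 2) - y (j + 1)) * a (j + 1) := by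
  have hlt : ∀ j ∈ range K, y (j + 1) * (a j - if j = K then 0 else a (j + 1)) =
      y (j + 1) * a j - y (j + 1) * a (j + 1) := fun j hj => by
    rw [if_neg (mem_range.mp hj).ne]; ring
  rw [sum_range_succ, if_pos rfl, sum_congr rfl hlt, sum_sub_distrib, sub_zero,
    sub_add_eq_add_sub, ← sum_range_succ (fun j => y (j + 1) * a j), sum_range_succ']
  simp only [sub_mul, sum_sub_distrib]
  ring

lemma strictMono_choose_two_add_two : StrictMono fun m : ℕ => (m + 2).choose 2 :=
  strictMono_nat_of_lt_succ fun m => by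
    have h : (m + 2 + 1).choose 2 = m + 2 + (m + 2).choose 2 := by
      simpa only [Nat.choose_one_right] using Nat.choose_succ_succ' (m + 2) 1
    change (m + 2).choose 2 < (m + 2 + 1).choose 2
    omega

lemma half_pow_injective : Function.Injective fun j : ℕ => (1 / 2 : ℝ) ^ j :=
  pow_right_injective₀ (by norm_num) (by norm_num)

/-- The weights of `χ_{n,K+1}(x, y)` as an exponential sum over the bases `x₁ ⋯ x_j`. -/
noncomputable def coalWeights (K : ℕ) (x y : ℕ → ℝ) : ℝ →₀ ℝ :=
  Finsupp.single 1 (y 1) +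
    ∑ j ∈ range K, Finsupp.single (∏ l ∈ Icc 1 (j + 1), x l) (y (j + 2) - y (j + 1))

lemma chi_succ_apply (n K : ℕ) (x y : ℕ → ℝ) (i : Fin (n - 1)) :
    chi n (K + 1) x y i = 1 / ((i.val + 2).choose 2 : ℝ) *
      Finsupp.linearCombination ℝ (fun r : ℝ => r ^ (i.val + 2).choose 2) (coalWeights K x y) := by
  simp only [chi, coalWeights, map_add, map_sum, Finsupp.linearCombination_single, smul_eq_mul,
    one_pow, mul_one]
  set s := (i.val + 2).choose 2
  have hs : s ≠ 0 := (Nat.choose_pos (by omega)).ne'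
  congr 1
  rw [show y 1 = y 1 * (∏ l ∈ Icc 1 0, x l) ^ s by simp, ← Ico_add_one_right_eq_Icc,
    ← sum_Ico_add' _ 0 (K + 1) 1, ← range_eq_Ico,
    ← sum_range_mul_sub_ite K y fun j => (∏ l ∈ Icc 1 j, x l) ^ s]
  refine sum_congr rfl fun j hj => ?_
  rw [add_tsub_cancel_right, prod_pow, mul_assoc, prod_Icc_succ_top (by omega), mul_pow]
  rcases eq_or_ne j K with rfl | hjK
  · simp [zero_pow hs]
  · rw [if_neg (by omega), if_neg hjK]
    ring

lemma coalWeights_succ_update (K : ℕ) (x y : ℕ → ℝ) (t : ℝ) :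
    coalWeights (K + 1) (Function.update x (K + 1) t) (Function.update y (K + 2) (y (K + 1))) =
      coalWeights K x y := by
  have hprod : ∀ j ∈ range K, ∏ l ∈ Icc 1 (j + 1), Function.update x (K + 1) t l =
      ∏ l ∈ Icc 1 (j + 1), x l := fun j hj =>
    prod_congr rfl fun l hl => Function.update_of_ne (by simp at hj hl; omega) _ _
  simp only [coalWeights, sum_range_succ, Function.update_self,
    Function.update_of_ne (show K + 1 ≠ K + 2 by omega), sub_self, Finsupp.single_zero, add_zero]
  congr 1
  refine sum_congr rfl fun j hj => ?_
  rw [hprod j hj, Function.update_of_ne (by simp at hj; omega),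
    Function.update_of_ne (by simp at hj; omega)]

lemma coal_subset_coal_succ (n K : ℕ) : Coal n (K + 1) ⊆ Coal n (K + 2) := by
  rintro _ ⟨x, y, hx, hy, rfl⟩
  refine ⟨Function.update x (K + 1) (1 / 2), Function.update y (K + 2) (y (K + 1)),
    fun j hj₁ hj₂ => ?_, fun j hj₁ hj₂ => ?_, ?_⟩
  · rcases eq_or_ne j (K + 1) with rfl | hj
    · norm_num
    · rw [Function.update_of_ne hj]
      exact hx j hj₁ (by omega)
  · rcases eq_or_ne j (K + 2) with rfl | hj
    · simpa using hy (K + 1) (by omega) le_rfl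
    · rw [Function.update_of_ne hj]
      exact hy j hj₁ (by omega)
  · funext i
    rw [chi_succ_apply, chi_succ_apply, coalWeights_succ_update]

lemma coalWeights_half_natCast (K : ℕ) :
    coalWeights K (fun _ => 1 / 2) (fun j => j) =
      ∑ j ∈ range (K + 1), Finsupp.single ((1 / 2 : ℝ) ^ j) 1 := by
  rw [coalWeights, sum_range_succ', add_comm]
  congr 1
  · refine sum_congr rfl fun j _ => ?_
    rw [prod_const, Nat.card_Icc]
    push_cast
    ring_nf
  · simp

lemma support_coalWeights_subset (K : ℕ) (x y : ℕ → ℝ) :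
    (coalWeights K x y).support ⊆ insert 1 ((range K).image fun j => ∏ l ∈ Icc 1 (j + 1), x l) := by
  classical
  refine Finsupp.support_add.trans (union_subset (Finsupp.support_single_subset.trans ?_) ?_)
  · simp
  · refine Finsupp.support_finsetSum.trans (biUnion_subset.mpr fun j hj => ?_)
    refine Finsupp.support_single_subset.trans ?_
    simpa using Or.inr ⟨j, mem_range.mp hj, rfl⟩

lemma chi_half_natCast_mem_coal (n K : ℕ) : chi n K (fun _ => 1 / 2) (fun j => j) ∈ Coal n K :=
  ⟨_, _, fun _ _ _ => by norm_num, fun j hj _ => by exact_mod_cast hj, rfl⟩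

lemma chi_half_natCast_notMem_coal {n K : ℕ} (hK : 2 * K + 2 ≤ n - 1) :
    chi n (K + 2) (fun _ => 1 / 2) (fun j => j) ∉ Coal n (K + 1) := by
  classical
  rintro ⟨x, y, hx, -, h⟩
  set A := (range (K + 2)).image fun j => (1 / 2 : ℝ) ^ j
  set B := (range K).image fun j => ∏ l ∈ Icc 1 (j + 1), x l
  have hA : #A = K + 2 := by rw [card_image_of_injective _ half_pow_injective, card_range]
  have hB : #B ≤ K := card_image_le.trans (card_range K).le
  have hW : (coalWeights (K + 1) (fun _ => 1 / 2) (fun j => j)).support = A := by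
    rw [coalWeights_half_natCast,
      Finsupp.support_sum_single_of_injective half_pow_injective _ one_ne_zero]
  have hW' : (coalWeights K x y).support ⊆ insert 1 B := support_coalWeights_subset K x y
  have hsupp : (coalWeights (K + 1) (fun _ => 1 / 2) (fun j => j) - coalWeights K x y).support ⊆
      A ∪ B := by
    refine Finsupp.support_sub.trans (union_subset (hW.le.trans subset_union_left)
      (hW'.trans (insert_subset ?_ subset_union_right)))
    exact mem_union_left _ (mem_image.mpr ⟨0, by simp, by simp⟩)
  set S := univ.image fun i : Fin (n - 1) => (((i : ℕ) + 2).choose 2 : ℝ)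
  have hS : #S = n - 1 := by
    rw [card_image_of_injective _ fun i j hij => ?_, card_fin]
    exact Fin.val_injective (strictMono_choose_two_add_two.injective (Nat.cast_injective hij))
  have hWW' := Finsupp.eq_zero_of_forall_linearCombination_rpow_eq_zero (fun r hr => ?_)
    ((card_le_card hsupp).trans ((card_union_le A B).trans (by omega))) (S := S) fun s hs => ?_
  · have hAB : A ⊆ insert 1 B := by rw [← hW, sub_eq_zero.mp hWW']; exact hW'
    have := (card_le_card hAB).trans (card_insert_le 1 B)
    omega
  · rcases mem_union.mp (hsupp hr) with hr | hr <;> obtain ⟨j, hj, rfl⟩ := mem_image.mp hr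
    · positivity
    · exact prod_pos fun l hl => (hx l (mem_Icc.mp hl).1 (by simp at hj hl; omega)).1
  · obtain ⟨i, -, rfl⟩ := mem_image.mp hs
    have := congrFun h i
    rw [chi_succ_apply, chi_succ_apply] at this
    simp_rw [Real.rpow_natCast]
    rw [map_sub, sub_eq_zero]
    exact mul_left_cancel₀ (one_div_ne_zero (Nat.cast_ne_zero.mpr (Nat.choose_pos (by omega)).ne'))
      this

theorem coal_strict_mono (n k : ℕ) (hk : 1 ≤ k) (hk' : k < (n + 1) / 2) :
    Coal n k ⊆ Coal n (k + 1) ∧ Coal n k ≠ Coal n (k + 1) := by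
  obtain ⟨K, rfl⟩ : ∃ K, k = K + 1 := ⟨k - 1, by omega⟩
  refine ⟨coal_subset_coal_succ n K, fun h => ?_⟩
  exact chi_half_natCast_notMem_coal (show 2 * K + 2 ≤ n - 1 by omega)
    (h ▸ chi_half_natCast_mem_coal n (K + 2))
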